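/- arXiv:2302.01989 — 2 statements merged into one kernel-verified Lean document; each statement's English description precedes it below -/
import Mathlib

section
/- For every approval instance, there exists a committee W ⊆ C with |W| ≤ k that satisfies EJR+. -/
/-!
Proportional Approval Voting works: take a committee `W` of size `k` maximising the PAV score
`∑ i, H(|A i ∩ W|)`, `H` the harmonic numbers. If `c`, `N'`, `ℓ` witnessed a violation of EJR+,
put `T = W ∪ {c}`. Removing `c' ∈ T` from `T` costs `∑_{i ∋ c'} 1 / |A i ∩ T|`; optimality of
`W = T \ {c}` makes `c` the cheapest member of `T`, while the voters in `N'` alone make `c` cost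
at least `|N'| / ℓ ≥ n / k`. So the `k + 1` costs add up to more than `n`, yet every voter
contributes exactly `1` to that total if she approves some member of `T`, and `0` otherwise.
-/

/-- A feasible committee `W` satisfies EJR+. -/
def EJRplus {V C : Type*} [Fintype V] [DecidableEq C]
    (A : V → Finset C) (k : ℕ) (W : Finset C) : Prop :=
  ¬ ∃ (c : C) (N' : Finset V) (ℓ : ℕ), 1 ≤ ℓ ∧ c ∉ W ∧
      (ℓ : ℚ) * (Fintype.card V) / k ≤ N'.card ∧
      (∀ i ∈ N', c ∈ A i ∧ (A i ∩ W).card < ℓ)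

open Finset

section PAV

variable {V C : Type*} [Fintype V] [DecidableEq C] (A : V → Finset C)

def pavScore (W : Finset C) : ℚ :=
  ∑ i, harmonic #(A i ∩ W)

def pavLoss (T : Finset C) (c : C) : ℚ :=
  ∑ i with c ∈ A i, (#(A i ∩ T) : ℚ)⁻¹

theorem pavScore_eq_pavScore_erase_add_pavLoss {T : Finset C} {c : C} (hc : c ∈ T) :
    pavScore A T = pavScore A (T.erase c) + pavLoss A T c := by
  rw [pavScore, pavScore, pavLoss, sum_filter, ← sum_add_distrib]
  refine sum_congr rfl fun i _ ↦ ?_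
  by_cases hci : c ∈ A i
  · have hcard : #(A i ∩ T.erase c) + 1 = #(A i ∩ T) := by
      rw [inter_erase]
      exact card_erase_add_one (mem_inter.2 ⟨hci, hc⟩)
    rw [if_pos hci, ← hcard, harmonic_succ]
  · rw [if_neg hci, add_zero, inter_erase, erase_eq_of_notMem fun h ↦ hci (mem_inter.1 h).1]

theorem sum_pavLoss_le_card (T : Finset C) :
    ∑ c ∈ T, pavLoss A T c ≤ Fintype.card V := by
  have hvoter (i : V) : ∑ c ∈ T, (if c ∈ A i then (#(A i ∩ T) : ℚ)⁻¹ else 0) ≤ 1 := by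
    rw [← sum_filter, sum_const, filter_mem_eq_inter, inter_comm, nsmul_eq_mul]
    exact mul_inv_le_one
  simp only [pavLoss, sum_filter]
  rw [sum_comm]
  simpa using sum_le_sum fun i (_ : i ∈ univ) ↦ hvoter i

theorem card_div_le_pavLoss_insert {W : Finset C} {c : C} (hc : c ∉ W) {N' : Finset V} {ℓ : ℕ}
    (hN' : ∀ i ∈ N', c ∈ A i ∧ #(A i ∩ W) < ℓ) :
    (#N' : ℚ) / ℓ ≤ pavLoss A (insert c W) c := by
  have hvoter : ∀ i ∈ N', (ℓ : ℚ)⁻¹ ≤ (#(A i ∩ insert c W) : ℚ)⁻¹ := fun i hi ↦ by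
    obtain ⟨hci, hlt⟩ := hN' i hi
    rw [inter_insert_of_mem hci, card_insert_of_notMem fun h ↦ hc (mem_inter.1 h).2]
    exact inv_anti₀ (by positivity) (by exact_mod_cast hlt)
  calc (#N' : ℚ) / ℓ = ∑ _i ∈ N', (ℓ : ℚ)⁻¹ := by rw [sum_const, nsmul_eq_mul, div_eq_mul_inv]
    _ ≤ ∑ i ∈ N', (#(A i ∩ insert c W) : ℚ)⁻¹ := sum_le_sum hvoter
    _ ≤ pavLoss A (insert c W) c :=
      sum_le_sum_of_subset_of_nonneg (fun i hi ↦ mem_filter.2 ⟨mem_univ i, (hN' i hi).1⟩)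
        fun _ _ _ ↦ by positivity

variable {A}

theorem pavLoss_insert_self_le_of_forall_pavScore_le {k : ℕ} {W : Finset C} (hW : #W = k)
    (hmax : ∀ W' : Finset C, #W' = k → pavScore A W' ≤ pavScore A W)
    {c c' : C} (hc : c ∉ W) (hc' : c' ∈ insert c W) :
    pavLoss A (insert c W) c ≤ pavLoss A (insert c W) c' := by
  have hswap := hmax ((insert c W).erase c') <| by
    rw [card_erase_of_mem hc', card_insert_of_notMem hc, hW, Nat.add_sub_cancel]
  have hcost := pavScore_eq_pavScore_erase_add_pavLoss A (mem_insert_self c W)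
  rw [erase_insert hc] at hcost
  linarith [pavScore_eq_pavScore_erase_add_pavLoss A hc']

theorem ejrplus_of_forall_pavScore_le {k : ℕ} (hn : 1 ≤ Fintype.card V) (hk : 1 ≤ k)
    {W : Finset C} (hW : #W = k)
    (hmax : ∀ W' : Finset C, #W' = k → pavScore A W' ≤ pavScore A W) :
    EJRplus A k W := by
  rintro ⟨c, N', ℓ, hℓ, hc, hsize, hN'⟩
  set n : ℚ := (Fintype.card V : ℚ)
  have hn0 : 0 < n := Nat.cast_pos.2 hn
  have hk0 : (0 : ℚ) < k := by exact_mod_cast hk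
  have hcost : n / k ≤ pavLoss A (insert c W) c := by
    refine le_trans ?_ (card_div_le_pavLoss_insert A hc hN')
    rw [div_le_div_iff₀ hk0 (by exact_mod_cast hℓ), mul_comm]
    rwa [div_le_iff₀ hk0] at hsize
  have htotal : (k + 1 : ℚ) * (n / k) ≤ n :=
    calc (k + 1 : ℚ) * (n / k) = #(insert c W) • (n / k) := by
          rw [card_insert_of_notMem hc, hW, nsmul_eq_mul, Nat.cast_succ]
      _ ≤ ∑ c' ∈ insert c W, pavLoss A (insert c W) c' := card_nsmul_le_sum _ _ _
          fun c' hc' ↦ hcost.trans (pavLoss_insert_self_le_of_forall_pavScore_le hW hmax hc hc')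
      _ ≤ n := sum_pavLoss_le_card A _
  rw [add_mul, one_mul, mul_div_cancel₀ n hk0.ne'] at htotal
  linarith [div_pos hn0 hk0]

end PAV

theorem exists_ejrplus_committee_general {V C : Type*} [Fintype V] [Fintype C]
    [DecidableEq C]
    (A : V → Finset C) (k : ℕ)
    (hn : 1 ≤ Fintype.card V) (hk1 : 1 ≤ k) (hk2 : k ≤ Fintype.card C) :
    ∃ W : Finset C, W.card ≤ k ∧ EJRplus A k W := by
  obtain ⟨W, hWk, hmax⟩ := exists_max_image (powersetCard k (univ : Finset C)) (pavScore A)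
    (powersetCard_nonempty.2 (by simpa using hk2))
  have hW : #W = k := (mem_powersetCard.1 hWk).2
  refine ⟨W, hW.le, ejrplus_of_forall_pavScore_le hn hk1 hW fun W' hW' ↦ hmax W' ?_⟩
  exact mem_powersetCard.2 ⟨subset_univ W', hW'⟩

/-- for every approval instance there exists a committee `W` with
`|W| ≤ k` satisfying EJR+. -/
theorem exists_ejrplus_committee {V C : Type*} [Fintype V] [Fintype C]
    [DecidableEq V] [DecidableEq C]
    (A : V → Finset C) (k : ℕ)
    (hn : 1 ≤ Fintype.card V) (hk1 : 1 ≤ k) (hk2 : k ≤ Fintype.card C) :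
    ∃ W : Finset C, W.card ≤ k ∧ EJRplus A k W :=
  exists_ejrplus_committee_general A k hn hk1 hk2
end

section
/- Consider the instance with 2 voters, candidates C = {c1,...,c6}, and committee size k = 3, in which voter 1 ranks c1 ≻ c2 ≻ c4 ≻ c5 ≻ c3 (and finds c6 unacceptable) and voter 2 ranks c1 ≻ c3 ≻ c4 ≻ c5 ≻ c2 (and finds c6 unacceptable). Then the committee W = {c1, c4, c5} satisfies rank-PJR+, but W is not rank-priceable with any budget B > k. -/
/-!
Rank-PJR+ holds because `c1` is everybody's top choice, and an unelected candidate ranked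
within `r` by both voters forces `r ≥ 5`, by which point both voters' top `r` contain all of `W`.
Rank-priceability fails because nobody may pay for the unelected `c2` and `c3`: condition (C5) for
`c2` at rank `2` says voter 1 spends all but at most `1` of her budget `B / 2` on `c1`, symmetrically
for voter 2 and `c3`, and `c1` costs only `1`; hence `B ≤ 3`.
-/

open Finset

/-- A rank price system for `W` with budget `B`. -/
def RankPriceSystem {V C : Type*} [Fintype V] [Fintype C] [DecidableEq V] [DecidableEq C]
    (A : V → Finset C) (rank : V → C → ℕ∞) (W : Finset C)
    (B : ℝ) (p : V → C → ℝ) : Prop :=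
  (∀ i c, 0 ≤ p i c ∧ p i c ≤ B / (Fintype.card V)) ∧
  (∀ i c, c ∉ A i → p i c = 0) ∧
  (∀ i : V, ∑ c : C, p i c ≤ B / (Fintype.card V)) ∧
  (∀ c ∈ W, ∑ i : V, p i c = 1) ∧
  (∀ c ∉ W, ∑ i : V, p i c = 0) ∧
  (∀ c ∉ W, ∀ r : ℕ, 1 ≤ r → r ≤ Fintype.card C →
    (∑ i ∈ Finset.univ.filter (fun i : V => rank i c ≤ (r : ℕ∞)),
        (B / (Fintype.card V) - ∑ c' : C, p i c')) +
    (∑ i ∈ Finset.univ.filter (fun i : V => rank i c ≤ (r : ℕ∞)),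
        ∑ c' ∈ Finset.univ.filter (fun c' : C => ¬ rank i c' ≤ (r : ℕ∞)), p i c') ≤ 1)

/-- A committee `W` satisfies rank-PJR+. -/
def RankPJRplus {V C : Type*} [Fintype V] [Fintype C] [DecidableEq V] [DecidableEq C]
    (rank : V → C → ℕ∞) (k : ℕ) (W : Finset C) : Prop :=
  ¬ ∃ (c : C) (r ℓ : ℕ) (N' : Finset V), c ∉ W ∧
      1 ≤ r ∧ r ≤ Fintype.card C ∧ 1 ≤ ℓ ∧
      (ℓ : ℚ) * (Fintype.card V) / k ≤ N'.card ∧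
      (∀ i ∈ N', rank i c ≤ (r : ℕ∞)) ∧
      ((N'.biUnion fun i => Finset.univ.filter fun c' : C => rank i c' ≤ (r : ℕ∞))
          ∩ W).card < ℓ

section RankPJRplus

variable {V C : Type*} [Fintype V] [Fintype C] [DecidableEq V] [DecidableEq C]

/-- `⋃_{i ∈ N'} A_i^r`. -/
def topRankedUnion (rank : V → C → ℕ∞) (N' : Finset V) (r : ℕ) : Finset C :=
  N'.biUnion fun i => univ.filter fun c' => rank i c' ≤ (r : ℕ∞)

/-- The least `ℓ` that could witness a violation is `|(⋃_{i ∈ N'} A_i^r) ∩ W| + 1`. -/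
theorem rankPJRplus_iff (rank : V → C → ℕ∞) (k : ℕ) (W : Finset C) :
    RankPJRplus rank k W ↔
      ∀ c ∉ W, ∀ r : ℕ, 1 ≤ r → r ≤ Fintype.card C → ∀ N' : Finset V,
        (∀ i ∈ N', rank i c ≤ (r : ℕ∞)) →
          (N'.card : ℚ) < ((topRankedUnion rank N' r ∩ W).card + 1) * Fintype.card V / k := by
  constructor
  · intro h c hc r hr1 hrC N' hN'
    by_contra! hle
    exact h ⟨c, r, _ + 1, N', hc, hr1, hrC, Nat.le_add_left 1 _, by exact_mod_cast hle, hN',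
      Nat.lt_succ_self _⟩
  · rintro h ⟨c, r, ℓ, N', hc, hr1, hrC, -, hℓ, hN', hlt⟩
    have hsucc : ((topRankedUnion rank N' r ∩ W).card + 1 : ℚ) ≤ ℓ := by exact_mod_cast hlt
    refine (h c hc r hr1 hrC N' hN').not_ge (le_trans ?_ hℓ)
    gcongr

end RankPJRplus

namespace RankPriceSystem

variable {V C : Type*} [Fintype V] [Fintype C] [DecidableEq V] [DecidableEq C]
  {A : V → Finset C} {rank : V → C → ℕ∞} {W : Finset C} {B : ℝ} {p : V → C → ℝ}

theorem payment_eq_zero_of_notMem (h : RankPriceSystem A rank W B p) {c : C} (hc : c ∉ W)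
    (i : V) : p i c = 0 :=
  (sum_eq_zero_iff_of_nonneg fun j _ => (h.1 j c).1).1 (h.2.2.2.2.1 c hc) i (mem_univ i)

theorem sum_budget_sub_sum_topRanked_le (h : RankPriceSystem A rank W B p) {c : C}
    (hc : c ∉ W) {r : ℕ} (hr1 : 1 ≤ r) (hrC : r ≤ Fintype.card C) :
    ∑ i ∈ univ.filter (fun i => rank i c ≤ (r : ℕ∞)),
      (B / Fintype.card V - ∑ c' ∈ univ.filter (fun c' => rank i c' ≤ (r : ℕ∞)), p i c') ≤ 1 := by
  have hC5 := h.2.2.2.2.2 c hc r hr1 hrC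
  rw [← sum_add_distrib] at hC5
  convert hC5 using 2 with i
  rw [← sum_filter_add_sum_filter_not univ (fun c' => rank i c' ≤ (r : ℕ∞))]
  ring

end RankPriceSystem

def exampleRank : Fin 2 → Fin 6 → ℕ∞ :=
  ![![1, 2, 5, 3, 4, ⊤], ![1, 5, 2, 3, 4, ⊤]]

def exampleCommittee : Finset (Fin 6) := {0, 3, 4}

theorem exampleCommittee_rankPJRplus : RankPJRplus exampleRank 3 exampleCommittee := by
  have hcheck : ∀ c ∉ exampleCommittee, ∀ r ∈ Icc (1 : ℕ) 6, ∀ N' : Finset (Fin 2),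
      (∀ i ∈ N', exampleRank i c ≤ (r : ℕ∞)) →
        3 * N'.card < 2 * ((topRankedUnion exampleRank N' r ∩ exampleCommittee).card + 1) := by
    decide
  rw [rankPJRplus_iff]
  intro c hc r hr1 hr6 N' hN'
  have hlt := hcheck c hc r (mem_Icc.2 ⟨hr1, hr6⟩) N' hN'
  rw [Fintype.card_fin, lt_div_iff₀ (by norm_num)]
  exact_mod_cast (by omega : N'.card * 3 < _ * 2)

theorem exampleCommittee_not_rankPriceable (A : Fin 2 → Finset (Fin 6)) {B : ℝ} (hB : 3 < B)
    (p : Fin 2 → Fin 6 → ℝ) : ¬ RankPriceSystem A exampleRank exampleCommittee B p := by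
  intro hp
  have voter1 := hp.sum_budget_sub_sum_topRanked_le (c := 1) (r := 2) (by decide) (by norm_num)
    (by simp)
  have voter2 := hp.sum_budget_sub_sum_topRanked_le (c := 2) (r := 2) (by decide) (by norm_num)
    (by simp)
  have hN1 : univ.filter (fun i => exampleRank i 1 ≤ ((2 : ℕ) : ℕ∞)) = {0} := by decide
  have hN2 : univ.filter (fun i => exampleRank i 2 ≤ ((2 : ℕ) : ℕ∞)) = {1} := by decide
  have hA1 : univ.filter (fun c => exampleRank 0 c ≤ ((2 : ℕ) : ℕ∞)) = {0, 1} := by decide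
  have hA2 : univ.filter (fun c => exampleRank 1 c ≤ ((2 : ℕ) : ℕ∞)) = {0, 2} := by decide
  simp only [hN1, hN2, hA1, hA2, sum_singleton, sum_pair (show (0 : Fin 6) ≠ 1 by decide),
    sum_pair (show (0 : Fin 6) ≠ 2 by decide), Fintype.card_fin] at voter1 voter2
  have hc1 := hp.2.2.2.1 0 (by decide)
  rw [Fin.sum_univ_two] at hc1
  have hc2 := hp.payment_eq_zero_of_notMem (c := 1) (by decide) 0
  have hc3 := hp.payment_eq_zero_of_notMem (c := 2) (by decide) 1
  linarith

/-- in the 2-voter, 6-candidate instance with `k = 3` where voter 1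
ranks `c1 ≻ c2 ≻ c4 ≻ c5 ≻ c3` (with `c6` unacceptable) and voter 2 ranks
`c1 ≻ c3 ≻ c4 ≻ c5 ≻ c2` (with `c6` unacceptable), the committee
`W = {c1, c4, c5}` satisfies rank-PJR+, but `W` is not rank-priceable with any
budget `B > k = 3`. (Candidate `cⱼ` is encoded as `j - 1 : Fin 6`.) -/
theorem rankpjrplus_not_rank_priceable_example :
    let rank : Fin 2 → Fin 6 → ℕ∞ :=
      ![![1, 2, 5, 3, 4, ⊤], ![1, 5, 2, 3, 4, ⊤]]
    let A : Fin 2 → Finset (Fin 6) := fun _ => {0, 1, 2, 3, 4}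
    let W : Finset (Fin 6) := {0, 3, 4}
    RankPJRplus rank 3 W ∧
      ∀ B : ℝ, (3 : ℝ) < B → ∀ p : Fin 2 → Fin 6 → ℝ,
        ¬ RankPriceSystem A rank W B p :=
  ⟨exampleCommittee_rankPJRplus, fun _ hB p => exampleCommittee_not_rankPriceable _ hB p⟩
end
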